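/- arXiv:2211.08744 — 4 statements merged into one kernel-verified Lean document; each statement's English description precedes it below -/
import Mathlib

section
/- Let u₁⁰, u₂¹, u₁¹ ∈ ℂ with u₁¹ ≠ 0, set M∞ := (1/u₁¹)·!![u₂¹, 1; 1, u₁⁰], and let ϑ̃, ϑ be Hermitian 2×2 complex matrices with det ϑ ≠ 0. Then the set { t ∈ ℝ : det(ϑ̃ + t·ϑ − M∞) = 0 } has at most two elements; equivalently, there are at most two real t for which the kernel of ϑ̃ + t·ϑ − M∞ is nontrivial. -/
open Matrix

/-!
For `2 × 2` matrices, `t ↦ det (A + t • B)` is a quadratic polynomial with leading coefficient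
`det B`. With `det ϑ ≠ 0` it therefore has at most two complex roots, hence at most two real
ones; a nontrivial kernel is the same as a vanishing determinant.
-/

theorem Matrix.det_fin_two_add_smul {R : Type*} [CommRing R] (A B : Matrix (Fin 2) (Fin 2) R)
    (z : R) :
    (A + z • B).det = B.det * (z * z)
      + (A 0 0 * B 1 1 + B 0 0 * A 1 1 - A 0 1 * B 1 0 - B 0 1 * A 1 0) * z + A.det := by
  simp only [det_fin_two, add_apply, smul_apply, smul_eq_mul]
  ring

/-- No discriminant is needed: once `r` is a root, the quadratic factors as
`(z - r) * (a * (z + r) + b)`. -/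
theorem exists_pair_of_quadratic_eq_zero {K : Type*} [Field K] {a b c : K} (ha : a ≠ 0) :
    ∃ r₁ r₂ : K, ∀ z, a * (z * z) + b * z + c = 0 → z = r₁ ∨ z = r₂ := by
  by_cases hroot : ∃ r, a * (r * r) + b * r + c = 0
  · obtain ⟨r, hr⟩ := hroot
    refine ⟨r, -b / a - r, fun z hz => ?_⟩
    have hfactor : (z - r) * (a * (z + r) + b) = 0 := by linear_combination hz - hr
    rcases mul_eq_zero.mp hfactor with h | h
    · exact .inl (sub_eq_zero.mp h)
    · right
      field_simp
      linear_combination h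
  · exact ⟨0, 0, fun z hz => absurd ⟨z, hz⟩ hroot⟩

theorem stmt6_general (u10 u11 u21 : ℂ)
    (ϑt ϑ : Matrix (Fin 2) (Fin 2) ℂ)
    (hdet : ϑ.det ≠ 0) :
    ∃ t₁ t₂ : ℝ,
      (∀ t : ℝ,
        (ϑt + (t : ℂ) • ϑ - (u11⁻¹ • !![u21, 1; 1, u10] : Matrix (Fin 2) (Fin 2) ℂ)).det = 0 →
        t = t₁ ∨ t = t₂) ∧
      (∀ t : ℝ,
        (∃ z : Fin 2 → ℂ, z ≠ 0 ∧
          (ϑt + (t : ℂ) • ϑ -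
            (u11⁻¹ • !![u21, 1; 1, u10] : Matrix (Fin 2) (Fin 2) ℂ)).mulVec z = 0) →
        t = t₁ ∨ t = t₂) := by
  set A := ϑt - (u11⁻¹ • !![u21, 1; 1, u10] : Matrix (Fin 2) (Fin 2) ℂ)
  have hshift (z : ℂ) : ϑt + z • ϑ - (u11⁻¹ • !![u21, 1; 1, u10]) = A + z • ϑ := by
    simp only [A]; abel
  obtain ⟨r₁, r₂, hr⟩ := exists_pair_of_quadratic_eq_zero hdet
    (b := A 0 0 * ϑ 1 1 + ϑ 0 0 * A 1 1 - A 0 1 * ϑ 1 0 - ϑ 0 1 * A 1 0) (c := A.det)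
  have hroots (t : ℝ) (ht : (A + (t : ℂ) • ϑ).det = 0) : t = r₁.re ∨ t = r₂.re := by
    rw [det_fin_two_add_smul] at ht
    rcases hr t ht with h | h
    · exact .inl (by rw [← h, Complex.ofReal_re])
    · exact .inr (by rw [← h, Complex.ofReal_re])
  refine ⟨r₁.re, r₂.re, fun t ht => hroots t ?_, fun t hker => hroots t ?_⟩
  · rwa [hshift] at ht
  · rw [← hshift, ← exists_mulVec_eq_zero_iff]
    exact hker

/-- for Hermitian `ϑ̃, ϑ` with `det ϑ ≠ 0` and `u₁¹ ≠ 0`, the set of real `t`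
with `det(ϑ̃ + tϑ − M∞) = 0` has at most two elements; equivalently there are at most two
real `t` for which the kernel of `ϑ̃ + tϑ − M∞` is nontrivial. -/
theorem stmt6 (u10 u11 u21 : ℂ) (h11 : u11 ≠ 0)
    (ϑt ϑ : Matrix (Fin 2) (Fin 2) ℂ) (h1 : ϑt.IsHermitian) (h2 : ϑ.IsHermitian)
    (hdet : ϑ.det ≠ 0) :
    ∃ t₁ t₂ : ℝ,
      (∀ t : ℝ,
        (ϑt + (t : ℂ) • ϑ - (u11⁻¹ • !![u21, 1; 1, u10] : Matrix (Fin 2) (Fin 2) ℂ)).det = 0 →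
        t = t₁ ∨ t = t₂) ∧
      (∀ t : ℝ,
        (∃ z : Fin 2 → ℂ, z ≠ 0 ∧
          (ϑt + (t : ℂ) • ϑ -
            (u11⁻¹ • !![u21, 1; 1, u10] : Matrix (Fin 2) (Fin 2) ℂ)).mulVec z = 0) →
        t = t₁ ∨ t = t₂) :=
  stmt6_general u10 u11 u21 ϑt ϑ hdet
end

section
/- Let β < b be real numbers, p, q, w : ℝ → ℝ, λ, λ₀ ∈ ℝ, and u, v : ℝ → ℝ. Assume that on [β, b): u and v are differentiable, the functions p·u′ and p·v′ are differentiable, and the Sturm–Liouville equations (p·u′)′(x) + q(x)·u(x) + λ·w(x)·u(x) = 0 and (p·v′)′(x) + q(x)·v(x) + λ₀·w(x)·v(x) = 0 hold for all x ∈ [β, b). Assume moreover that x ↦ u(x)·v(x)·w(x) is integrable on [β, b). Then the limit as x → b⁻ of the modified Wronskian [u,v](x) := p(x)·(u′(x)·v(x) − u(x)·v′(x)) exists and equals [u,v](β) + (λ₀ − λ)·∫_β^b u(x)·v(x)·w(x) dx. -/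
/-!
The Lagrange identity makes the Wronskian a primitive of `(λ₀ - λ) u v w` on `[β, b)`; since
`u v w` is integrable up to `b`, its primitive is continuous at `b`, which gives the limit.
-/

open Set Filter Topology MeasureTheory

theorem tendsto_intervalIntegral_nhdsLT {f : ℝ → ℝ} {a b : ℝ} (hab : a < b)
    (hf : IntegrableOn f (Ico a b)) :
    Tendsto (fun x => ∫ t in a..x, f t) (𝓝[<] b) (𝓝 (∫ t in Ico a b, f t)) := by
  have hf' : IntegrableOn f (uIcc a b) := by
    rwa [uIcc_of_le hab.le, integrableOn_Icc_iff_integrableOn_Ico]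
  have hcont := intervalIntegral.continuousOn_primitive_interval hf' b right_mem_uIcc
  rw [uIcc_of_le hab.le] at hcont
  rw [← nhdsWithin_Ico_eq_nhdsLT hab, integral_Ico_eq_integral_Ioc,
    ← intervalIntegral.integral_of_le hab.le]
  exact (hcont.mono Ico_subset_Icc_self).tendsto

theorem tendsto_nhdsLT_of_hasDerivAt_of_integrableOn_Ico {f f' : ℝ → ℝ} {a b : ℝ}
    (hab : a < b) (hderiv : ∀ x ∈ Ico a b, HasDerivAt f (f' x) x)
    (hint : IntegrableOn f' (Ico a b)) :
    Tendsto f (𝓝[<] b) (𝓝 (f a + ∫ t in Ico a b, f' t)) := by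
  have hftc : ∀ x ∈ Ioo a b, f a + ∫ t in a..x, f' t = f x := fun x hx => by
    have hsub : Icc a x ⊆ Ico a b := Icc_subset_Ico_right hx.2
    rw [intervalIntegral.integral_eq_sub_of_hasDerivAt, add_sub_cancel]
    · rw [uIcc_of_le hx.1.le]; exact fun t ht => hderiv t (hsub ht)
    · exact (intervalIntegrable_iff_integrableOn_Icc_of_le hx.1.le).2 (hint.mono_set hsub)
  refine (tendsto_const_nhds.add (tendsto_intervalIntegral_nhdsLT hab hint)).congr' ?_
  filter_upwards [Ioo_mem_nhdsLT hab] using hftc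

theorem hasDerivAt_wronskian_of_sturmLiouville {p q w u v u' v' pu' pv' : ℝ → ℝ}
    {lam lam0 x : ℝ} (hu : HasDerivAt u (u' x) x) (hv : HasDerivAt v (v' x) x)
    (hpu : HasDerivAt (fun y => p y * u' y) (pu' x) x)
    (hpv : HasDerivAt (fun y => p y * v' y) (pv' x) x)
    (hequ : pu' x + q x * u x + lam * w x * u x = 0)
    (heqv : pv' x + q x * v x + lam0 * w x * v x = 0) :
    HasDerivAt (fun y => p y * (u' y * v y - u y * v' y))
      ((lam0 - lam) * (u x * v x * w x)) x := by
  have hW : (fun y => p y * (u' y * v y - u y * v' y)) =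
      (fun y => p y * u' y) * v - u * fun y => p y * v' y := by
    funext y; simp only [Pi.sub_apply, Pi.mul_apply]; ring
  rw [hW]
  refine ((hpu.mul hv).sub (hu.mul hpv)).congr_deriv ?_
  linear_combination v x * hequ - u x * heqv

/-- localized Green/Lagrange identity: if `u` solves the Sturm–Liouville
equation at `λ` and `v` at `λ₀` on `[β, b)`, and `u·v·w` is integrable on `[β, b)`, then the
modified Wronskian `[u,v](x) = p(x)(u′(x)v(x) − u(x)v′(x))` has a limit as `x → b⁻` equal to
`[u,v](β) + (λ₀ − λ)·∫_β^b u·v·w`. -/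
theorem stmt10 (β b : ℝ) (hβb : β < b)
    (p q w u v u' v' pu' pv' : ℝ → ℝ) (lam lam0 : ℝ)
    (hu : ∀ x ∈ Ico β b, HasDerivAt u (u' x) x)
    (hv : ∀ x ∈ Ico β b, HasDerivAt v (v' x) x)
    (hpu : ∀ x ∈ Ico β b, HasDerivAt (fun y => p y * u' y) (pu' x) x)
    (hpv : ∀ x ∈ Ico β b, HasDerivAt (fun y => p y * v' y) (pv' x) x)
    (hequ : ∀ x ∈ Ico β b, pu' x + q x * u x + lam * w x * u x = 0)
    (heqv : ∀ x ∈ Ico β b, pv' x + q x * v x + lam0 * w x * v x = 0)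
    (hint : MeasureTheory.IntegrableOn (fun x => u x * v x * w x) (Ico β b)) :
    Tendsto (fun x => p x * (u' x * v x - u x * v' x)) (nhdsWithin b (Iio b))
      (nhds (p β * (u' β * v β - u β * v' β) +
        (lam0 - lam) * ∫ x in Ico β b, u x * v x * w x)) := by
  have h := tendsto_nhdsLT_of_hasDerivAt_of_integrableOn_Ico hβb
    (fun x hx => hasDerivAt_wronskian_of_sturmLiouville (hu x hx) (hv x hx) (hpu x hx)
      (hpv x hx) (hequ x hx) (heqv x hx)) (hint.const_mul (lam0 - lam))
  rwa [integral_const_mul] at h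
end

section
/- Let a < b be real numbers, p, q, w : ℝ → ℝ, λ, λ₀ ∈ ℝ with λ ≠ λ₀, and u, v : ℝ → ℝ. Assume that on (a, b): u and v are differentiable, p·u′ and p·v′ are differentiable, and (p·u′)′ + q·u + λ·w·u = 0 and (p·v′)′ + q·v + λ₀·w·v = 0 hold pointwise. Assume x ↦ u(x)·v(x)·w(x) is integrable on (a, b), and that the modified Wronskian [u,v](x) := p(x)·(u′(x)·v(x) − u(x)·v′(x)) tends to 0 as x → a⁺. Then [u,v](x) tends to 0 as x → b⁻ if and only if ∫_a^b u(x)·v(x)·w(x) dx = 0. -/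
open Set Filter MeasureTheory intervalIntegral Topology

/-!
On `(a, b)` the modified Wronskian `W = p (u' v - u v')` satisfies `W' = (λ₀ - λ) u v w`, by the
two differential equations. Since `u v w` is integrable and `W → 0` at `a⁺`, the fundamental theorem
of calculus gives `W(x) = (λ₀ - λ) ∫_a^x u v w`, so `W → (λ₀ - λ) ∫_a^b u v w` at `b⁻`; as `λ ≠ λ₀`,
this limit vanishes iff the integral does.
-/

theorem tendsto_nhdsLT_of_hasDerivAt_of_tendsto_nhdsGT {E : Type*} [NormedAddCommGroup E]
    [NormedSpace ℝ E] [CompleteSpace E] {f f' : ℝ → E} {a b : ℝ} {fa : E} (hab : a < b)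
    (hderiv : ∀ x ∈ Ioo a b, HasDerivAt f (f' x) x) (hint : IntegrableOn f' (Ioo a b))
    (ha : Tendsto f (𝓝[>] a) (𝓝 fa)) :
    Tendsto f (𝓝[<] b) (𝓝 (fa + ∫ x in Ioo a b, f' x)) := by
  have hprimitive : ∀ x ∈ Ioo a b, fa + ∫ t in a..x, f' t = f x := fun x hx => by
    rw [integral_eq_sub_of_hasDerivAt_of_tendsto hx.1
      (fun y hy => hderiv y ⟨hy.1, hy.2.trans hx.2⟩)
      ((intervalIntegrable_iff_integrableOn_Ioo_of_le hx.1.le).2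
        (hint.mono_set (Ioo_subset_Ioo_right hx.2.le)))
      ha ((hderiv x hx).continuousAt.tendsto.mono_left nhdsWithin_le_nhds)]
    abel
  have hcont : Tendsto (fun x => ∫ t in a..x, f' t) (𝓝[<] b) (𝓝 (∫ t in a..b, f' t)) := by
    have := continuousOn_primitive_interval (f := f') (μ := volume) (a := a) (b := b)
      (by rwa [uIcc_of_le hab.le, integrableOn_Icc_iff_integrableOn_Ioo])
    rw [uIcc_of_le hab.le] at this
    exact (this b (right_mem_Icc.2 hab.le)).tendsto.mono_left
      (nhdsWithin_le_of_mem (Icc_mem_nhdsLT hab))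
  rw [← integral_Ioc_eq_integral_Ioo, ← integral_of_le hab.le]
  refine (tendsto_const_nhds.add hcont).congr' ?_
  filter_upwards [Ioo_mem_nhdsLT hab] using hprimitive

theorem hasDerivAt_modifiedWronskian {p q w u v u' v' : ℝ → ℝ} {Du Dv lam lam0 x : ℝ}
    (hu : HasDerivAt u (u' x) x) (hv : HasDerivAt v (v' x) x)
    (hpu : HasDerivAt (fun y => p y * u' y) Du x) (hpv : HasDerivAt (fun y => p y * v' y) Dv x)
    (hequ : Du + q x * u x + lam * w x * u x = 0) (heqv : Dv + q x * v x + lam0 * w x * v x = 0) :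
    HasDerivAt (fun y => p y * (u' y * v y - u y * v' y)) ((lam0 - lam) * (u x * v x * w x)) x := by
  refine (((hpu.mul hv).sub (hu.mul hpv)).congr_deriv ?_).congr_of_eventuallyEq
    (.of_forall fun y => ?_)
  · linear_combination v x * hequ - u x * heqv
  · simp only [Pi.mul_apply, Pi.sub_apply]
    ring

/-- if `u` solves the Sturm–Liouville equation at `λ` and `v` at `λ₀ ≠ λ` on
`(a, b)`, `u·v·w` is integrable on `(a, b)`, and the modified Wronskian
`[u,v](x) = p(x)(u′(x)v(x) − u(x)v′(x))` tends to `0` as `x → a⁺`, then `[u,v](x) → 0` as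
`x → b⁻` iff `∫_a^b u·v·w = 0`. -/
theorem stmt11 (a b : ℝ) (hab : a < b)
    (p q w u v u' v' pu' pv' : ℝ → ℝ) (lam lam0 : ℝ) (hll : lam ≠ lam0)
    (hu : ∀ x ∈ Ioo a b, HasDerivAt u (u' x) x)
    (hv : ∀ x ∈ Ioo a b, HasDerivAt v (v' x) x)
    (hpu : ∀ x ∈ Ioo a b, HasDerivAt (fun y => p y * u' y) (pu' x) x)
    (hpv : ∀ x ∈ Ioo a b, HasDerivAt (fun y => p y * v' y) (pv' x) x)
    (hequ : ∀ x ∈ Ioo a b, pu' x + q x * u x + lam * w x * u x = 0)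
    (heqv : ∀ x ∈ Ioo a b, pv' x + q x * v x + lam0 * w x * v x = 0)
    (hint : MeasureTheory.IntegrableOn (fun x => u x * v x * w x) (Ioo a b))
    (ha : Tendsto (fun x => p x * (u' x * v x - u x * v' x)) (nhdsWithin a (Ioi a)) (nhds 0)) :
    Tendsto (fun x => p x * (u' x * v x - u x * v' x)) (nhdsWithin b (Iio b)) (nhds 0) ↔
      ∫ x in Ioo a b, u x * v x * w x = 0 := by
  have hW := tendsto_nhdsLT_of_hasDerivAt_of_tendsto_nhdsGT hab
    (fun x hx => hasDerivAt_modifiedWronskian (hu x hx) (hv x hx) (hpu x hx) (hpv x hx)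
      (hequ x hx) (heqv x hx)) (hint.const_mul (lam0 - lam)) ha
  rw [zero_add, MeasureTheory.integral_const_mul] at hW
  constructor
  · intro hb
    exact (mul_eq_zero.1 (tendsto_nhds_unique hW hb)).resolve_left (sub_ne_zero.2 hll.symm)
  · intro hzero
    simpa only [hzero, mul_zero] using hW
end

section
/- Let u₁⁰, u₁¹, u₂⁰, u₂¹ be real numbers with u₁⁰·u₂¹ − u₁¹·u₂⁰ = 1 and u₁¹ ≠ 0, and set M∞ := (1/u₁¹)·!![u₂¹, 1; 1, u₁⁰]. Let ϑ̃, ϑ be real symmetric 2×2 matrices with det(ϑ) = 0 and with c = 0, where c := ϑ̃₁₁·ϑ₂₂·u₁¹ + ϑ₁₁·ϑ̃₂₂·u₁¹ − ϑ₁₁·u₁⁰ − ϑ₂₂·u₂¹ − ϑ̃₁₂·ϑ₁₂·u₁¹ − ϑ̃₂₁·ϑ₂₁·u₁¹ + ϑ₁₂ + ϑ₂₁. Set d := det(ϑ̃)·u₁¹ − ϑ̃₁₁·u₁⁰ − ϑ̃₂₂·u₂¹ + ϑ̃₁₂ + ϑ̃₂₁ + u₂⁰. Then det(ϑ̃ +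 t·ϑ − M∞) = d/u₁¹ for every t ∈ ℝ; consequently, if d = 0 then det(ϑ̃ + t·ϑ − M∞) = 0 for all t ∈ ℝ, and if d ≠ 0 then det(ϑ̃ + t·ϑ − M∞) ≠ 0 for all t ∈ ℝ. -/
/-!
`det (X + t • ϑ)` is a quadratic polynomial in `t` with leading coefficient `det ϑ` and linear
coefficient the polarized determinant of `X` and `ϑ`. For `X = ϑ̃ - M∞` that linear coefficient is
`c / u₁¹`, so both vanish and the determinant is the constant `det (ϑ̃ - M∞)`, which the Wronskian
normalization reduces to `d / u₁¹`.
-/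

open Matrix

namespace Matrix

variable {R : Type*} [CommRing R]

/-- The polarization of the `2 × 2` determinant: `det (A + B) = det A + detPolar A B + det B`. -/
def detPolar (A B : Matrix (Fin 2) (Fin 2) R) : R :=
  A 0 0 * B 1 1 + A 1 1 * B 0 0 - A 0 1 * B 1 0 - A 1 0 * B 0 1

theorem det_add_smul_fin_two (A B : Matrix (Fin 2) (Fin 2) R) (t : R) :
    (A + t • B).det = A.det + t * detPolar A B + t ^ 2 * B.det := by
  simp only [det_fin_two, detPolar, add_apply, smul_apply, smul_eq_mul]
  ring

theorem det_add_smul_eq_det_fin_two {A B : Matrix (Fin 2) (Fin 2) R} (hB : B.det = 0)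
    (hAB : detPolar A B = 0) (t : R) : (A + t • B).det = A.det := by
  rw [det_add_smul_fin_two, hB, hAB]
  ring

end Matrix

section WeylMatrix

/- `u11⁻¹ • !![u21, 1; 1, u10]` is the Weyl matrix `M∞` of the Friedrichs extension. -/

variable {u10 u11 u20 u21 : ℝ}

theorem det_sub_weylMatrix (hW : u10 * u21 - u11 * u20 = 1) (h11 : u11 ≠ 0)
    (A : Matrix (Fin 2) (Fin 2) ℝ) :
    (A - u11⁻¹ • !![u21, 1; 1, u10]).det =
      (A.det * u11 - A 0 0 * u10 - A 1 1 * u21 + A 0 1 + A 1 0 + u20) / u11 := by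
  simp only [det_fin_two, Matrix.sub_apply, Matrix.smul_apply, smul_eq_mul, of_apply, cons_val',
    cons_val_zero, cons_val_one, empty_val', cons_val_fin_one]
  field_simp
  linear_combination hW

theorem detPolar_sub_weylMatrix (h11 : u11 ≠ 0) (A : Matrix (Fin 2) (Fin 2) ℝ)
    {B : Matrix (Fin 2) (Fin 2) ℝ} (hB : B.IsSymm) :
    detPolar (A - u11⁻¹ • !![u21, 1; 1, u10]) B =
      (A 0 0 * B 1 1 * u11 + B 0 0 * A 1 1 * u11 - B 0 0 * u10 - B 1 1 * u21 -
        A 0 1 * B 0 1 * u11 - A 1 0 * B 1 0 * u11 + B 0 1 + B 1 0) / u11 := by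
  have hB10 : B 1 0 = B 0 1 := hB.apply 0 1
  simp only [detPolar, Matrix.sub_apply, Matrix.smul_apply, smul_eq_mul, of_apply, cons_val',
    cons_val_zero, cons_val_one, empty_val', cons_val_fin_one]
  rw [hB10]
  field_simp
  ring

end WeylMatrix

theorem stmt15_general (u10 u11 u20 u21 : ℝ)
    (hW : u10 * u21 - u11 * u20 = 1) (h11 : u11 ≠ 0)
    (ϑt ϑ : Matrix (Fin 2) (Fin 2) ℝ) (h2 : ϑ.IsSymm)
    (hdet : ϑ.det = 0)
    (hc : ϑt 0 0 * ϑ 1 1 * u11 + ϑ 0 0 * ϑt 1 1 * u11 - ϑ 0 0 * u10 - ϑ 1 1 * u21 -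
        ϑt 0 1 * ϑ 0 1 * u11 - ϑt 1 0 * ϑ 1 0 * u11 + ϑ 0 1 + ϑ 1 0 = 0) :
    (∀ t : ℝ,
      (ϑt + t • ϑ - (u11⁻¹ • !![u21, 1; 1, u10]) : Matrix (Fin 2) (Fin 2) ℝ).det =
        (ϑt.det * u11 - ϑt 0 0 * u10 - ϑt 1 1 * u21 + ϑt 0 1 + ϑt 1 0 + u20) / u11) ∧
    ((ϑt.det * u11 - ϑt 0 0 * u10 - ϑt 1 1 * u21 + ϑt 0 1 + ϑt 1 0 + u20 = 0 →
        ∀ t : ℝ,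
          (ϑt + t • ϑ - (u11⁻¹ • !![u21, 1; 1, u10]) : Matrix (Fin 2) (Fin 2) ℝ).det = 0) ∧
      (ϑt.det * u11 - ϑt 0 0 * u10 - ϑt 1 1 * u21 + ϑt 0 1 + ϑt 1 0 + u20 ≠ 0 →
        ∀ t : ℝ,
          (ϑt + t • ϑ - (u11⁻¹ • !![u21, 1; 1, u10]) : Matrix (Fin 2) (Fin 2) ℝ).det ≠ 0)) := by
  have hpolar : detPolar (ϑt - u11⁻¹ • !![u21, 1; 1, u10]) ϑ = 0 := by
    rw [detPolar_sub_weylMatrix h11 ϑt h2, hc, zero_div]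
  have hconst : ∀ t : ℝ,
      (ϑt + t • ϑ - (u11⁻¹ • !![u21, 1; 1, u10]) : Matrix (Fin 2) (Fin 2) ℝ).det =
        (ϑt.det * u11 - ϑt 0 0 * u10 - ϑt 1 1 * u21 + ϑt 0 1 + ϑt 1 0 + u20) / u11 := by
    intro t
    rw [add_sub_right_comm, det_add_smul_eq_det_fin_two hdet hpolar, det_sub_weylMatrix hW h11]
  refine ⟨hconst, fun hd t => ?_, fun hd t => ?_⟩
  · rw [hconst, hd, zero_div]
  · rw [hconst]
    exact div_ne_zero hd h11

/-- if `det ϑ = 0` and `c = 0`, then `det(ϑ̃ + tϑ − M∞) = d/u₁¹` for all real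
`t`; hence if `d = 0` the determinant vanishes for all `t`, and if `d ≠ 0` for no `t`. -/
theorem stmt15 (u10 u11 u20 u21 : ℝ)
    (hW : u10 * u21 - u11 * u20 = 1) (h11 : u11 ≠ 0)
    (ϑt ϑ : Matrix (Fin 2) (Fin 2) ℝ) (h1 : ϑt.IsSymm) (h2 : ϑ.IsSymm)
    (hdet : ϑ.det = 0)
    (hc : ϑt 0 0 * ϑ 1 1 * u11 + ϑ 0 0 * ϑt 1 1 * u11 - ϑ 0 0 * u10 - ϑ 1 1 * u21 -
        ϑt 0 1 * ϑ 0 1 * u11 - ϑt 1 0 * ϑ 1 0 * u11 + ϑ 0 1 + ϑ 1 0 = 0) :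
    (∀ t : ℝ,
      (ϑt + t • ϑ - (u11⁻¹ • !![u21, 1; 1, u10]) : Matrix (Fin 2) (Fin 2) ℝ).det =
        (ϑt.det * u11 - ϑt 0 0 * u10 - ϑt 1 1 * u21 + ϑt 0 1 + ϑt 1 0 + u20) / u11) ∧
    ((ϑt.det * u11 - ϑt 0 0 * u10 - ϑt 1 1 * u21 + ϑt 0 1 + ϑt 1 0 + u20 = 0 →
        ∀ t : ℝ,
          (ϑt + t • ϑ - (u11⁻¹ • !![u21, 1; 1, u10]) : Matrix (Fin 2) (Fin 2) ℝ).det = 0) ∧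
      (ϑt.det * u11 - ϑt 0 0 * u10 - ϑt 1 1 * u21 + ϑt 0 1 + ϑt 1 0 + u20 ≠ 0 →
        ∀ t : ℝ,
          (ϑt + t • ϑ - (u11⁻¹ • !![u21, 1; 1, u10]) : Matrix (Fin 2) (Fin 2) ℝ).det ≠ 0)) :=
  stmt15_general u10 u11 u20 u21 hW h11 ϑt ϑ h2 hdet hc
end
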